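/- arXiv:1608.07992 — 5 statements merged into one kernel-verified Lean document; each statement's English description precedes it below -/
import Mathlib

section
/- Let 𝔽 be a field, ι a nonempty finite index type, (V i)_{i ∈ ι} a family of vector spaces over 𝔽, and W i ⊆ V i a subspace for each i. For each i₀ ∈ ι, let T_{i₀} denote the image in the tensor product ⨂_{i ∈ ι} V i of the canonical map from ⨂_{i ∈ ι} U i, where U_{i₀} = W_{i₀} and U i = V i for i ≠ i₀. Then the intersection ⋂_{i₀ ∈ ι} T_{i₀} equals the image of the canonical map ⨂_{i ∈ ι} W i → ⨂_{i ∈ ι} V i. -/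
/-!
Choose a projection `p i` of each `V i` onto `W i`. An element of the `i₀`-th image is fixed by
the map that applies `p i₀` in the `i₀`-th factor and the identity elsewhere. These maps
commute and compose to `⨂ p i`, so an element of every image is fixed by `⨂ p i`, whose range
lies in the image of `⨂ W i`.
-/

open Function
open scoped TensorProduct

namespace PiTensorProduct

variable {R ι : Type*} [CommSemiring R] {M : ι → Type*} [∀ i, AddCommMonoid (M i)]
  [∀ i, Module R (M i)]

theorem map_apply_eq_self_of_mem_range_map_subtype {f : Π i, M i →ₗ[R] M i}
    {U : Π i, Submodule R (M i)} (hf : ∀ i, ∀ v ∈ U i, f i v = v) {x : ⨂[R] i, M i}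
    (hx : x ∈ LinearMap.range (map fun i => (U i).subtype)) : map f x = x := by
  obtain ⟨y, rfl⟩ := hx
  have hcomp : (fun i => f i ∘ₗ (U i).subtype) = fun i => (U i).subtype :=
    funext fun i => LinearMap.ext fun v => hf i v v.2
  rw [← LinearMap.comp_apply, ← map_comp, hcomp]

theorem range_map_le_range_map_subtype {N : ι → Type*} [∀ i, AddCommMonoid (N i)]
    [∀ i, Module R (N i)] {f : Π i, N i →ₗ[R] M i} {U : Π i, Submodule R (M i)}
    (hf : ∀ i, LinearMap.range (f i) ≤ U i) :
    LinearMap.range (map f) ≤ LinearMap.range (map fun i => (U i).subtype) := by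
  have hfactor : f = fun i => (U i).subtype ∘ₗ (f i).codRestrict (U i)
      fun v => hf i ⟨v, rfl⟩ := rfl
  rw [hfactor, map_comp]
  exact LinearMap.range_comp_le_range _ _

theorem range_map_subtype_mono {U U' : Π i, Submodule R (M i)} (h : ∀ i, U i ≤ U' i) :
    LinearMap.range (map fun i => (U i).subtype) ≤
      LinearMap.range (map fun i => (U' i).subtype) :=
  range_map_le_range_map_subtype fun i => by rw [Submodule.range_subtype]; exact h i

variable [DecidableEq ι]

theorem map_piecewise_apply_eq_self {f : Π i, M i →ₗ[R] M i} {x : ⨂[R] i, M i}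
    (s : Finset ι) (h : ∀ i ∈ s, map (update (fun _ => LinearMap.id) i (f i)) x = x) :
    map (s.piecewise f fun _ => LinearMap.id) x = x := by
  induction s using Finset.induction_on with
  | empty => simp [map_id]
  | @insert a s ha ih =>
    have hsplit : (insert a s).piecewise f (fun _ => LinearMap.id) =
        fun i => update (fun _ => LinearMap.id) a (f a) i ∘ₗ
          s.piecewise f (fun _ => LinearMap.id) i := by
      funext i
      rcases eq_or_ne i a with rfl | hi
      · simp [ha]
      · simp [hi]
    rw [hsplit, map_comp, LinearMap.comp_apply,
      ih fun i hi => h i (Finset.mem_insert_of_mem hi), h a (Finset.mem_insert_self a s)]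

theorem map_apply_eq_self_of_forall_map_update [Fintype ι] {f : Π i, M i →ₗ[R] M i}
    {x : ⨂[R] i, M i} (h : ∀ i, map (update (fun _ => LinearMap.id) i (f i)) x = x) :
    map f x = x := by
  simpa using map_piecewise_apply_eq_self Finset.univ fun i _ => h i

end PiTensorProduct

open PiTensorProduct in
theorem intersection_of_piTensor_images_general (𝔽 : Type*) [Field 𝔽]
    (ι : Type*) [Fintype ι] [DecidableEq ι]
    (V : ι → Type*) [∀ i, AddCommGroup (V i)] [∀ i, Module 𝔽 (V i)]
    (W : ∀ i, Submodule 𝔽 (V i)) :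
    (⨅ i₀ : ι, LinearMap.range (PiTensorProduct.map
        (fun i => ((if i = i₀ then W i else ⊤ : Submodule 𝔽 (V i)).subtype)))) =
      LinearMap.range (PiTensorProduct.map (fun i => (W i).subtype)) := by
  refine le_antisymm (fun x hx => ?_) (le_iInf fun i₀ => range_map_subtype_mono fun i => ?_)
  · choose C hC using fun i => (W i).exists_isCompl
    let p i := (W i).projection (C i) (hC i)
    have hfixed (i₀ : ι) : map (update (fun _ => LinearMap.id) i₀ (p i₀)) x = x := by
      refine map_apply_eq_self_of_mem_range_map_subtype (fun i v hv => ?_)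
        (Submodule.mem_iInf _ |>.1 hx i₀)
      rcases eq_or_ne i i₀ with rfl | hi
      · rw [update_self]
        exact Submodule.projection_apply_of_mem_left (hC i) (by simpa using hv)
      · simp [hi]
    rw [← map_apply_eq_self_of_forall_map_update hfixed]
    exact range_map_le_range_map_subtype (fun i => (Submodule.range_projection (hC i)).le)
      ⟨x, rfl⟩
  · split_ifs <;> simp

/-- Lemma 2.2(ii): for a finite family of subspaces `W i ⊆ V i`, the intersection over
`i₀` of the images in `⨂ i, V i` of the tensor products in which the `i₀`-th factor is
replaced by `W i₀` (and the others kept equal to `V i`, realised as the top submodule)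
equals the image of `⨂ i, W i`. -/
theorem intersection_of_piTensor_images (𝔽 : Type*) [Field 𝔽]
    (ι : Type*) [Fintype ι] [Nonempty ι] [DecidableEq ι]
    (V : ι → Type*) [∀ i, AddCommGroup (V i)] [∀ i, Module 𝔽 (V i)]
    (W : ∀ i, Submodule 𝔽 (V i)) :
    (⨅ i₀ : ι, LinearMap.range (PiTensorProduct.map
        (fun i => ((if i = i₀ then W i else ⊤ : Submodule 𝔽 (V i)).subtype)))) =
      LinearMap.range (PiTensorProduct.map (fun i => (W i).subtype)) :=
  intersection_of_piTensor_images_general 𝔽 ι V W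
end

section
/- Fix integers p ≥ 3 and f ≥ 2, and let 𝓘, S(λ), and compatibility be as defined. For every λ ∈ 𝓘 and every subset S' ⊆ S(λ), there exists exactly one λ' ∈ 𝓘 such that S(λ') = S' and λ' is compatible with λ. -/
/-- The six allowed affine functions `x ↦ x`, `x ↦ x+1`, `x ↦ x−1`, `x ↦ p−2−x`,
`x ↦ p−1−x`, `x ↦ p−3−x`. -/
def sixSet (p : ℤ) : Set (ℤ → ℤ) :=
  {fun x => x, fun x => x + 1, fun x => x - 1,
   fun x => p - 2 - x, fun x => p - 1 - x, fun x => p - 3 - x}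

/-- The functions of the form `x ↦ x`, `x ↦ x+1`, `x ↦ x−1`. -/
def idLikeSet : Set (ℤ → ℤ) :=
  {fun x => x, fun x => x + 1, fun x => x - 1}

/-- The functions of the form `x ↦ p−2−x`, `x ↦ p−1−x`, `x ↦ p−3−x`. -/
def flipLikeSet (p : ℤ) : Set (ℤ → ℤ) :=
  {fun x => p - 2 - x, fun x => p - 1 - x, fun x => p - 3 - x}

/-- The functions `x ↦ x`, `x ↦ p−2−x` (no shift). -/
def noShiftSet (p : ℤ) : Set (ℤ → ℤ) :=
  {fun x => x, fun x => p - 2 - x}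

/-- The functions `x ↦ x+1`, `x ↦ x−1`, `x ↦ p−1−x`, `x ↦ p−3−x` (nonzero shift). -/
def shiftSet (p : ℤ) : Set (ℤ → ℤ) :=
  {fun x => x + 1, fun x => x - 1, fun x => p - 1 - x, fun x => p - 3 - x}

/-- The functions with shift `+1`: `x ↦ x+1`, `x ↦ p−1−x`. -/
def plusSet (p : ℤ) : Set (ℤ → ℤ) :=
  {fun x => x + 1, fun x => p - 1 - x}

/-- Membership in the set `𝓘`: each `λ i` is one of the six allowed affine functions,
and the adjacency conditions (indices mod `f`) hold. -/
def MemI (p : ℤ) (f : ℕ) (lam : ZMod f → ℤ → ℤ) : Prop :=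
  ∀ i : ZMod f,
    lam i ∈ sixSet p ∧
    (lam i ∈ idLikeSet → lam (i + 1) ∈ noShiftSet p) ∧
    (lam i ∈ flipLikeSet p → lam (i + 1) ∈ shiftSet p)

/-- `S(λ)`: the set of indices where `λ i` carries a nonzero shift `±1`. -/
def ShiftIdx (p : ℤ) (f : ℕ) (lam : ZMod f → ℤ → ℤ) : Set (ZMod f) :=
  {i | lam i ∈ shiftSet p}

/-- `λ` and `λ'` are compatible: on every common index of `S(λ)` and `S(λ')`,
the signs of the shifts agree. -/
def Compatible (p : ℤ) (f : ℕ) (lam lam' : ZMod f → ℤ → ℤ) : Prop :=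
  ∀ i ∈ ShiftIdx p f lam ∩ ShiftIdx p f lam',
    (lam i ∈ plusSet p ↔ lam' i ∈ plusSet p)

/-!
Each of the six functions is `x ↦ ε x + s` with `ε` either the identity or the reflection
`x ↦ p - 2 - x`, and `s ∈ {0, 1, -1}`. Membership in `𝓘` says exactly that `λ i` is a reflection
iff `i + 1 ∈ S(λ)`, so an element of `𝓘` is determined by `S(λ)` and the signs of its shifts.
Compatibility with `λ` prescribes these signs on `S' ⊆ S(λ)`, and conversely every set `S'`
with signs on it arises from an element of `𝓘`.
-/

/-- `(b, s)` encodes `x ↦ ε x + s`, with `ε` the reflection `x ↦ p - 2 - x` if `b` and the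
identity otherwise. -/
def sixFn (p : ℤ) : Bool × SignType → ℤ → ℤ
  | (false, .zero) => fun x => x
  | (false, .pos) => fun x => x + 1
  | (false, .neg) => fun x => x - 1
  | (true, .zero) => fun x => p - 2 - x
  | (true, .pos) => fun x => p - 1 - x
  | (true, .neg) => fun x => p - 3 - x

section sixFn

variable (p : ℤ) (a : Bool × SignType)

lemma sixFn_injective : Function.Injective (sixFn p) := by
  rintro ⟨_ | _, _ | _ | _⟩ ⟨_ | _, _ | _ | _⟩ h <;>
    have h0 := congrFun h 0 <;> have h1 := congrFun h 1 <;>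
    simp [sixFn] at h0 h1 ⊢ <;> omega

lemma sixSet_eq_range : sixSet p = Set.range (sixFn p) := by
  ext g
  constructor
  · rintro (rfl | rfl | rfl | rfl | rfl | rfl)
    exacts [⟨(false, 0), rfl⟩, ⟨(false, 1), rfl⟩, ⟨(false, -1), rfl⟩,
      ⟨(true, 0), rfl⟩, ⟨(true, 1), rfl⟩, ⟨(true, -1), rfl⟩]
  · rintro ⟨⟨_ | _, _ | _ | _⟩, rfl⟩ <;> simp [sixSet, sixFn]

lemma sixFn_mem_idLikeSet_iff : sixFn p a ∈ idLikeSet ↔ a.1 = false := by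
  rw [show idLikeSet = {sixFn p (false, 0), sixFn p (false, 1), sixFn p (false, -1)} from rfl]
  simp only [Set.mem_insert_iff, Set.mem_singleton_iff, (sixFn_injective p).eq_iff]
  revert a; decide

lemma sixFn_mem_flipLikeSet_iff : sixFn p a ∈ flipLikeSet p ↔ a.1 = true := by
  rw [show flipLikeSet p = {sixFn p (true, 0), sixFn p (true, 1), sixFn p (true, -1)} from rfl]
  simp only [Set.mem_insert_iff, Set.mem_singleton_iff, (sixFn_injective p).eq_iff]
  revert a; decide

lemma sixFn_mem_noShiftSet_iff : sixFn p a ∈ noShiftSet p ↔ a.2 = 0 := by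
  rw [show noShiftSet p = {sixFn p (false, 0), sixFn p (true, 0)} from rfl]
  simp only [Set.mem_insert_iff, Set.mem_singleton_iff, (sixFn_injective p).eq_iff]
  revert a; decide

lemma sixFn_mem_shiftSet_iff : sixFn p a ∈ shiftSet p ↔ a.2 ≠ 0 := by
  rw [show shiftSet p = {sixFn p (false, 1), sixFn p (false, -1), sixFn p (true, 1),
    sixFn p (true, -1)} from rfl]
  simp only [Set.mem_insert_iff, Set.mem_singleton_iff, (sixFn_injective p).eq_iff]
  revert a; decide

lemma sixFn_mem_plusSet_iff : sixFn p a ∈ plusSet p ↔ a.2 = 1 := by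
  rw [show plusSet p = {sixFn p (false, 1), sixFn p (true, 1)} from rfl]
  simp only [Set.mem_insert_iff, Set.mem_singleton_iff, (sixFn_injective p).eq_iff]
  revert a; decide

end sixFn

lemma plusSet_subset_shiftSet (p : ℤ) : plusSet p ⊆ shiftSet p := by
  rintro _ (rfl | rfl) <;> simp [shiftSet]

lemma mem_idLikeSet_or_mem_flipLikeSet {p : ℤ} {g : ℤ → ℤ} (hg : g ∈ sixSet p) :
    g ∈ idLikeSet ∨ g ∈ flipLikeSet p := by
  obtain ⟨⟨b, s⟩, rfl⟩ := sixSet_eq_range p ▸ hg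
  rw [sixFn_mem_idLikeSet_iff, sixFn_mem_flipLikeSet_iff]
  exact b.eq_false_or_eq_true.symm

lemma notMem_shiftSet_of_mem_noShiftSet {p : ℤ} {g : ℤ → ℤ} (hg : g ∈ noShiftSet p) :
    g ∉ shiftSet p := by
  rcases hg with rfl | rfl
  exacts [(sixFn_mem_shiftSet_iff p (false, 0)).not.mpr (by decide),
    (sixFn_mem_shiftSet_iff p (true, 0)).not.mpr (by decide)]

lemma eq_of_mem_sixSet {p : ℤ} {g h : ℤ → ℤ} (hg : g ∈ sixSet p) (hh : h ∈ sixSet p)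
    (hflip : g ∈ flipLikeSet p ↔ h ∈ flipLikeSet p) (hshift : g ∈ shiftSet p ↔ h ∈ shiftSet p)
    (hplus : g ∈ plusSet p ↔ h ∈ plusSet p) : g = h := by
  rw [sixSet_eq_range] at hg hh
  obtain ⟨a, rfl⟩ := hg
  obtain ⟨b, rfl⟩ := hh
  simp only [sixFn_mem_flipLikeSet_iff, sixFn_mem_shiftSet_iff, sixFn_mem_plusSet_iff]
    at hflip hshift hplus
  congr 1
  revert a b; decide

namespace MemI

variable {p : ℤ} {f : ℕ} {lam mu : ZMod f → ℤ → ℤ}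

lemma mem_flipLikeSet_iff (hlam : MemI p f lam) (i : ZMod f) :
    lam i ∈ flipLikeSet p ↔ i + 1 ∈ ShiftIdx p f lam := by
  refine ⟨(hlam i).2.2, fun hnext => ?_⟩
  refine (mem_idLikeSet_or_mem_flipLikeSet (hlam i).1).resolve_left fun hid => ?_
  exact notMem_shiftSet_of_mem_noShiftSet ((hlam i).2.1 hid) hnext

lemma eq_of_shiftIdx_eq (hlam : MemI p f lam) (hmu : MemI p f mu)
    (hS : ShiftIdx p f lam = ShiftIdx p f mu)
    (hsign : ∀ i ∈ ShiftIdx p f lam, lam i ∈ plusSet p ↔ mu i ∈ plusSet p) : lam = mu := by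
  funext i
  have hshift : lam i ∈ shiftSet p ↔ mu i ∈ shiftSet p := Set.ext_iff.mp hS i
  refine eq_of_mem_sixSet (hlam i).1 (hmu i).1 ?_ hshift ?_
  · rw [hlam.mem_flipLikeSet_iff, hmu.mem_flipLikeSet_iff, hS]
  · by_cases hi : i ∈ ShiftIdx p f lam
    · exact hsign i hi
    · exact iff_of_false (hi ∘ (plusSet_subset_shiftSet p ·))
        (hshift.not.mp hi ∘ (plusSet_subset_shiftSet p ·))

end MemI

section restrictShifts

open Classical in
/-- Keeps the shifts of `lam` on `S'`, with their signs; the reflections are then forced by the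
adjacency conditions of `𝓘`. -/
noncomputable def restrictShifts (p : ℤ) (f : ℕ) (lam : ZMod f → ℤ → ℤ) (S' : Set (ZMod f)) :
    ZMod f → ℤ → ℤ := fun i =>
  sixFn p (decide (i + 1 ∈ S'), if i ∈ S' then (if lam i ∈ plusSet p then 1 else -1) else 0)

variable (p : ℤ) (f : ℕ) (lam : ZMod f → ℤ → ℤ) (S' : Set (ZMod f))

lemma restrictShifts_mem_shiftSet_iff (i : ZMod f) :
    restrictShifts p f lam S' i ∈ shiftSet p ↔ i ∈ S' := by
  rw [restrictShifts, sixFn_mem_shiftSet_iff]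
  split_ifs <;> simp_all

lemma memI_restrictShifts : MemI p f (restrictShifts p f lam S') := by
  intro i
  refine ⟨sixSet_eq_range p ▸ ⟨_, rfl⟩, fun hid => ?_, fun hflip => ?_⟩
  · simp only [restrictShifts, sixFn_mem_idLikeSet_iff, decide_eq_false_iff_not] at hid
    rw [restrictShifts, sixFn_mem_noShiftSet_iff, if_neg hid]
  · simp only [restrictShifts, sixFn_mem_flipLikeSet_iff, decide_eq_true_eq] at hflip
    exact (restrictShifts_mem_shiftSet_iff p f lam S' (i + 1)).mpr hflip

lemma shiftIdx_restrictShifts : ShiftIdx p f (restrictShifts p f lam S') = S' :=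
  Set.ext (restrictShifts_mem_shiftSet_iff p f lam S')

lemma restrictShifts_mem_plusSet_iff {i : ZMod f} (hi : i ∈ S') :
    restrictShifts p f lam S' i ∈ plusSet p ↔ lam i ∈ plusSet p := by
  rw [restrictShifts, sixFn_mem_plusSet_iff, if_pos hi]
  split_ifs <;> simp_all

lemma compatible_restrictShifts : Compatible p f lam (restrictShifts p f lam S') :=
  fun i hi => (restrictShifts_mem_plusSet_iff p f lam S'
    ((restrictShifts_mem_shiftSet_iff p f lam S' i).mp hi.2)).symm

end restrictShifts

theorem exists_unique_compatible_general (p : ℤ) (f : ℕ) (lam : ZMod f → ℤ → ℤ)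
    (S' : Set (ZMod f)) (hS' : S' ⊆ ShiftIdx p f lam) :
    ∃! lam' : ZMod f → ℤ → ℤ,
      MemI p f lam' ∧ ShiftIdx p f lam' = S' ∧ Compatible p f lam lam' := by
  refine ⟨restrictShifts p f lam S', ⟨memI_restrictShifts p f lam S',
    shiftIdx_restrictShifts p f lam S', compatible_restrictShifts p f lam S'⟩, ?_⟩
  rintro mu ⟨hmu, hmuS, hcompat⟩
  refine hmu.eq_of_shiftIdx_eq (memI_restrictShifts p f lam S')
    (hmuS.trans (shiftIdx_restrictShifts p f lam S').symm) fun i hi => ?_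
  have hiS' : i ∈ S' := hmuS ▸ hi
  rw [restrictShifts_mem_plusSet_iff p f lam S' hiS', hcompat i ⟨hS' hiS', hi⟩]

/-- Lemma 2.12: for every `λ ∈ 𝓘` and every subset `S' ⊆ S(λ)`, there is exactly one
`λ' ∈ 𝓘` with `S(λ') = S'` which is compatible with `λ`. -/
theorem exists_unique_compatible (p : ℤ) (hp : 3 ≤ p) (f : ℕ) (hf : 2 ≤ f)
    (lam : ZMod f → ℤ → ℤ) (hlam : MemI p f lam)
    (S' : Set (ZMod f)) (hS' : S' ⊆ ShiftIdx p f lam) :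
    ∃! lam' : ZMod f → ℤ → ℤ,
      MemI p f lam' ∧ ShiftIdx p f lam' = S' ∧ Compatible p f lam lam' :=
  exists_unique_compatible_general p f lam S' hS'
end

section
/- Let R be a ring and let A, B, C be R-modules. Suppose given two short exact sequences of R-modules 0 → B →^{ι} X →^{π} A → 0 and 0 → B →^{ι'} X' →^{π'} A → 0. Let X'' := {(x, x') ∈ X × X' : π x = π' x'} (the pullback), and let Y := X'' / {(−ι b, ι' b) : b ∈ B} (the quotient of X'' by the skew diagonal copy of B; Y represents the Baer sum of the two extensions). Assume: (i) Hom_R(X, C) = 0, and (ii) the restriction map Hom_R(X', C) → Hom_R(B, C), φ ↦ φ ∘ ι', is bijective. Then Hom_R(Y, C) = 0. -/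
/-!
A map `φ` on the pullback `X''` that kills the skew diagonal takes the same value on `(ι b, 0)`
and on `(0, ι' b)`. Extend `b ↦ φ (ι b, 0)` along `ι'` to some `φ' : X' → C`. Then
`θ := φ - φ' ∘ pr₂` vanishes on `ker pr₁ = {(0, ι' b)}`, and `pr₁ : X'' → X` is onto, so `θ`
factors through `X` and is zero. Evaluating `θ = 0` at `(ι b, 0)` shows that `φ' ∘ ι' = 0`,
whence `φ' = 0` by injectivity of restriction, and finally `φ = θ = 0`.
-/

open LinearMap

theorem LinearMap.eq_zero_of_ker_le_of_surjective {R M N P : Type*} [Ring R]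
    [AddCommGroup M] [Module R M] [AddCommGroup N] [Module R N] [AddCommGroup P] [Module R P]
    {f : M →ₗ[R] N} (hf : Function.Surjective f) (hN : ∀ g : N →ₗ[R] P, g = 0)
    {θ : M →ₗ[R] P} (h : ker f ≤ ker θ) : θ = 0 := by
  let e := f.quotKerEquivOfSurjective hf
  ext x
  calc θ x = ((ker f).liftQ θ h ∘ₗ e.symm.toLinearMap) (f x) := by simp [e]
    _ = 0 := by rw [hN (_ ∘ₗ _), zero_apply]

section Pullback

variable {R A X X' : Type*} [Ring R] [AddCommGroup A] [Module R A]
  [AddCommGroup X] [Module R X] [AddCommGroup X'] [Module R X']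

abbrev LinearMap.pullback (f : X →ₗ[R] A) (g : X' →ₗ[R] A) : Submodule R (X × X') :=
  ker (f ∘ₗ fst R X X' - g ∘ₗ snd R X X')

variable {f : X →ₗ[R] A} {g : X' →ₗ[R] A}

theorem LinearMap.mem_pullback {p : X × X'} : p ∈ f.pullback g ↔ f p.1 = g p.2 := by
  simp [LinearMap.pullback, sub_eq_zero]

theorem LinearMap.pullback_fst_surjective (hg : Function.Surjective g) :
    Function.Surjective (fst R X X' ∘ₗ (f.pullback g).subtype) := fun x ↦
  let ⟨x', hx'⟩ := hg (f x)
  ⟨⟨(x, x'), mem_pullback.2 hx'.symm⟩, rfl⟩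

end Pullback

theorem eq_zero_of_skewDiagonal_le_ker {R A B C X X' : Type*} [Ring R]
    [AddCommGroup A] [Module R A] [AddCommGroup B] [Module R B]
    [AddCommGroup C] [Module R C] [AddCommGroup X] [Module R X]
    [AddCommGroup X'] [Module R X']
    {ι : B →ₗ[R] X} {π : X →ₗ[R] A} {ι' : B →ₗ[R] X'} {π' : X' →ₗ[R] A}
    (hexact : range ι ≤ ker π) (hπ' : Function.Surjective π') (hexact' : range ι' = ker π')
    (hX : ∀ φ : X →ₗ[R] C, φ = 0)
    (hX' : Function.Bijective fun φ : X' →ₗ[R] C => φ.comp ι')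
    {φ : π.pullback π' →ₗ[R] C}
    (hφ : (range ((-ι).prod ι')).comap (π.pullback π').subtype ≤ ker φ) : φ = 0 := by
  let P := π.pullback π'
  let j : B →ₗ[R] P := codRestrict P (ι.prod (0 : B →ₗ[R] X')) fun b ↦ mem_pullback.2 <| by
    simpa using hexact (mem_range_self ι b)
  let j' : B →ₗ[R] P := codRestrict P ((0 : B →ₗ[R] X).prod ι') fun b ↦ mem_pullback.2 <| by
    simpa using (hexact' ▸ mem_range_self ι' b : ι' b ∈ ker π').symm
  have agree : φ ∘ₗ j' = φ ∘ₗ j := by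
    ext b
    have : j' b - j b ∈ ker φ := hφ ⟨b, by ext <;> simp [j, j']⟩
    rwa [mem_ker, map_sub, sub_eq_zero] at this
  obtain ⟨φ', hφ' : φ' ∘ₗ ι' = φ ∘ₗ j⟩ := hX'.2 (φ ∘ₗ j)
  have hθ : φ - φ' ∘ₗ snd R X X' ∘ₗ P.subtype = 0 := by
    refine eq_zero_of_ker_le_of_surjective (pullback_fst_surjective hπ') hX ?_
    rintro ⟨⟨x, x'⟩, hk⟩ (rfl : x = 0)
    obtain ⟨b, rfl⟩ : x' ∈ range ι' := hexact' ▸ by simpa using (mem_pullback.1 hk).symm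
    have hj' : (⟨(0, ι' b), hk⟩ : P) = j' b := Subtype.ext rfl
    rw [mem_ker, LinearMap.sub_apply, hj', ← comp_apply φ j', agree, ← hφ']
    simp [j']
  have hφ'0 : φ' = 0 := hX'.1 <| by
    change φ' ∘ₗ ι' = 0 ∘ₗ ι'
    rw [hφ', zero_comp]
    ext b
    simpa [j] using LinearMap.congr_fun hθ (j b)
  simpa [hφ'0, sub_eq_zero] using hθ

theorem baer_sum_hom_vanishing_general (R A B C X X' : Type*) [Ring R]
    [AddCommGroup A] [Module R A] [AddCommGroup B] [Module R B]
    [AddCommGroup C] [Module R C] [AddCommGroup X] [Module R X]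
    [AddCommGroup X'] [Module R X']
    (ι : B →ₗ[R] X) (π : X →ₗ[R] A)
    (ι' : B →ₗ[R] X') (π' : X' →ₗ[R] A)
    (hexact : LinearMap.range ι = LinearMap.ker π)
    (hπ' : Function.Surjective π')
    (hexact' : LinearMap.range ι' = LinearMap.ker π')
    (hX : ∀ φ : X →ₗ[R] C, φ = 0)
    (hX' : Function.Bijective fun φ : X' →ₗ[R] C => φ.comp ι') :
    ∀ ψ : (↥(LinearMap.ker
          (π.comp (LinearMap.fst R X X') - π'.comp (LinearMap.snd R X X'))) ⧸
        Submodule.comap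
          (LinearMap.ker
            (π.comp (LinearMap.fst R X X') - π'.comp (LinearMap.snd R X X'))).subtype
          (LinearMap.range ((-ι).prod ι'))) →ₗ[R] C, ψ = 0 := by
  intro ψ
  refine Submodule.linearMap_qext _ ?_
  rw [zero_comp]
  refine eq_zero_of_skewDiagonal_le_ker hexact.le hπ' hexact' hX hX' ?_
  exact (Submodule.ker_mkQ _).ge.trans (ker_le_ker_comp _ _)

/-- Lemma 2.15 (Baer sum): given short exact sequences `0 → B → X → A → 0` and
`0 → B → X' → A → 0`, let `X''` be the pullback `{(x, x') : π x = π' x'}` and `Y` its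
quotient by the skew diagonal `{(−ι b, ι' b) : b ∈ B}` (representing the Baer sum).
If `Hom(X, C) = 0` and restriction along `ι'` gives a bijection
`Hom(X', C) ≃ Hom(B, C)`, then `Hom(Y, C) = 0`. -/
theorem baer_sum_hom_vanishing (R A B C X X' : Type*) [Ring R]
    [AddCommGroup A] [Module R A] [AddCommGroup B] [Module R B]
    [AddCommGroup C] [Module R C] [AddCommGroup X] [Module R X]
    [AddCommGroup X'] [Module R X']
    (ι : B →ₗ[R] X) (π : X →ₗ[R] A)
    (ι' : B →ₗ[R] X') (π' : X' →ₗ[R] A)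
    (hι : Function.Injective ι) (hπ : Function.Surjective π)
    (hexact : LinearMap.range ι = LinearMap.ker π)
    (hι' : Function.Injective ι') (hπ' : Function.Surjective π')
    (hexact' : LinearMap.range ι' = LinearMap.ker π')
    (hX : ∀ φ : X →ₗ[R] C, φ = 0)
    (hX' : Function.Bijective fun φ : X' →ₗ[R] C => φ.comp ι') :
    ∀ ψ : (↥(LinearMap.ker
          (π.comp (LinearMap.fst R X X') - π'.comp (LinearMap.snd R X X'))) ⧸
        Submodule.comap
          (LinearMap.ker
            (π.comp (LinearMap.fst R X X') - π'.comp (LinearMap.snd R X X'))).subtype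
          (LinearMap.range ((-ι).prod ι'))) →ₗ[R] C, ψ = 0 :=
  baer_sum_hom_vanishing_general R A B C X X' ι π ι' π' hexact hπ' hexact' hX hX'
end

section
/- Let R be a ring, B an R-module, A and A' submodules of B, and σ a simple R-module. Assume: (a) the quotient B/A is isomorphic to a finite direct sum of copies of σ; (b) σ is not a subquotient of B/A' (i.e., there are no submodules Q ⊆ P ⊆ B/A' with P/Q isomorphic to σ). Then every submodule M of B with M ∩ A' ⊆ A satisfies M ⊆ A. -/
/-!
If `M ⊄ A`, the image of `M` in `B ⧸ A ≅ σⁿ` is nonzero, so some coordinate projection gives a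
surjection `f : M → σ` vanishing on `M ⊓ A ⊇ M ⊓ A'`. Then `f` factors through the image of `M`
in `B ⧸ A'`, and that image modulo the image of `ker f` is a copy of `σ` inside `B ⧸ A'`.
-/

open LinearMap Submodule

section

variable {R N X S : Type*} [Ring R] [AddCommGroup N] [Module R N] [AddCommGroup X] [Module R X]
  [AddCommGroup S] [Module R S]

theorem LinearMap.exists_surjective_proj_comp_of_ne_zero {ι : Type*} [IsSimpleModule R S]
    {g : N →ₗ[R] ι → S} (hg : g ≠ 0) : ∃ i, Function.Surjective (proj i ∘ₗ g) := by
  obtain ⟨x, hx⟩ : ∃ x, g x ≠ 0 := not_forall.mp fun h ↦ hg (LinearMap.ext h)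
  obtain ⟨i, hi⟩ := Function.ne_iff.mp hx
  exact ⟨i, surjective_of_ne_zero fun h ↦ hi (LinearMap.congr_fun h x)⟩

theorem LinearMap.exists_subquotient_equiv_of_ker_le (φ : N →ₗ[R] X) {f : N →ₗ[R] S}
    (hf : Function.Surjective f) (hker : ker φ ≤ ker f) :
    ∃ P Q : Submodule R X, Q ≤ P ∧ Nonempty ((P ⧸ Q.comap P.subtype) ≃ₗ[R] S) := by
  set P := range φ
  set Q := (ker f).map φ
  set g := (Q.comap P.subtype).mkQ ∘ₗ φ.rangeRestrict
  have hg : Function.Surjective g := (mkQ_surjective _).comp φ.surjective_rangeRestrict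
  have hker_g : ker g = ker f := by
    rw [ker_comp, ker_mkQ, ← comap_comp, ← comap_map_eq_self hker]
    rfl
  exact ⟨P, Q, map_le_range, ⟨(g.quotKerEquivOfSurjective hg).symm ≪≫ₗ
    quotEquivOfEq _ _ hker_g ≪≫ₗ f.quotKerEquivOfSurjective hf⟩⟩

end

/-- Proposition 2.9 (module-theoretic form): let `A, A'` be submodules of `B` and `σ`
a simple module. If `B/A` is isomorphic to a finite direct sum of copies of `σ` and
`σ` is not a subquotient of `B/A'`, then every submodule `M` of `B` with
`M ∩ A' ⊆ A` satisfies `M ⊆ A`. -/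
theorem submodule_le_of_inter_le (R B σ : Type*) [Ring R]
    [AddCommGroup B] [Module R B] [AddCommGroup σ] [Module R σ] [IsSimpleModule R σ]
    (A A' : Submodule R B)
    (ha : ∃ n : ℕ, Nonempty ((B ⧸ A) ≃ₗ[R] (Fin n → σ)))
    (hb : ¬ ∃ (P Q : Submodule R (B ⧸ A')), Q ≤ P ∧
      Nonempty ((↥P ⧸ Submodule.comap P.subtype Q) ≃ₗ[R] σ))
    (M : Submodule R B) (hM : M ⊓ A' ≤ A) : M ≤ A := by
  by_contra hMA
  obtain ⟨n, ⟨e⟩⟩ := ha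
  set π := e.toLinearMap ∘ₗ A.mkQ ∘ₗ M.subtype
  have hker_π : ker π = A.comap M.subtype := by
    rw [ker_comp, LinearEquiv.ker, comap_bot, ker_comp, ker_mkQ]
  have hπ : π ≠ 0 := fun h ↦ hMA <| by
    rw [← comap_subtype_eq_top, ← hker_π, h, ker_zero]
  obtain ⟨i, hi⟩ := exists_surjective_proj_comp_of_ne_zero hπ
  refine hb <| exists_subquotient_equiv_of_ker_le (A'.mkQ ∘ₗ M.subtype) hi ?_
  calc ker (A'.mkQ ∘ₗ M.subtype) = A'.comap M.subtype := by rw [ker_comp, ker_mkQ]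
    _ ≤ A.comap M.subtype := fun y hy ↦ hM ⟨y.2, hy⟩
    _ = ker π := hker_π.symm
    _ ≤ ker (proj i ∘ₗ π) := ker_le_ker_comp _ _
end

section
/- Let R be a ring, N an R-module, σ a simple R-module, and A ⊆ B submodules of N with a further submodule A' ⊆ B. Assume: (a) the quotient B/A is isomorphic to a finite direct sum of copies of σ; (b) σ is not a subquotient of B/A' (i.e., there are no submodules Q ⊆ P ⊆ B/A' with P/Q isomorphic to σ); (c) every simple submodule of N/A is contained in B/A; (d) every nonzero submodule of N/A contains a simple submodule. Then every submodule M of N with M ∩ A' ⊆ A satisfies M ⊆ A. -/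
/-!
If `M ⊄ A`, the image of `M` in `N/A` is nonzero, so it contains a simple submodule `S`, which
lies in the `σ`-isotypic module `B/A` and hence is isomorphic to `σ`. Its preimage `C` in `M`
lies in `B` and satisfies `C/(C ∩ A) ≅ S`. Since `C ∩ A' ⊆ A`, the map `C → B/A'` identifies
`C/(C ∩ A)` with a subquotient of `B/A'`, so `σ` would be a subquotient of `B/A'`.
-/

theorem isIsotypicOfType_pi (R ι S : Type*) [Ring R] [AddCommGroup S] [Module R S]
    [IsSimpleModule R S] : IsIsotypicOfType R (ι → S) S := by
  intro m _
  have := IsSimpleModule.nontrivial R m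
  obtain ⟨x, hx⟩ := exists_ne (0 : m)
  obtain ⟨i, hi⟩ : ∃ i, (x : ι → S) i ≠ 0 := by
    by_contra! h
    exact hx (Subtype.ext (funext h))
  have hne : (LinearMap.proj i).comp m.subtype ≠ 0 := fun h ↦ hi (LinearMap.congr_fun h x)
  exact ⟨.ofBijective _ (LinearMap.bijective_of_ne_zero hne)⟩

namespace Submodule

variable {R X Y : Type*} [Ring R] [AddCommGroup X] [Module R X] [AddCommGroup Y] [Module R Y]

theorem nonempty_quotient_equiv_range_quotient_map (g : X →ₗ[R] Y) (D : Submodule R X)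
    (hker : LinearMap.ker g ≤ D) :
    Nonempty ((X ⧸ D) ≃ₗ[R]
      (LinearMap.range g ⧸ (D.map g).comap (LinearMap.range g).subtype)) := by
  set φ := ((D.map g).comap (LinearMap.range g).subtype).mkQ ∘ₗ g.rangeRestrict
  have hφ : LinearMap.ker φ = D := by
    rw [LinearMap.ker_comp, ker_mkQ, ← comap_comp, LinearMap.rangeRestrict,
      LinearMap.subtype_comp_codRestrict, comap_map_eq, sup_eq_left.mpr hker]
  exact ⟨(quotEquivOfEq _ _ hφ.symm).trans
    (φ.quotKerEquivOfSurjective ((mkQ_surjective _).comp g.surjective_rangeRestrict))⟩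

theorem nonempty_quotient_equiv_of_le_map (f : X →ₗ[R] Y) {M : Submodule R X}
    {S : Submodule R Y} (hS : S ≤ M.map f) :
    Nonempty ((↥(M ⊓ S.comap f) ⧸ (LinearMap.ker f).comap (M ⊓ S.comap f).subtype) ≃ₗ[R] S) := by
  set C := M ⊓ S.comap f
  set ψ : C →ₗ[R] S := (f ∘ₗ C.subtype).codRestrict S fun c ↦ c.2.2
  have hψ : Function.Surjective ψ := by
    rintro ⟨y, hy⟩
    obtain ⟨x, hxM, rfl⟩ := hS hy
    exact ⟨⟨x, hxM, hy⟩, rfl⟩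
  have hker : LinearMap.ker ψ = (LinearMap.ker f).comap C.subtype :=
    (LinearMap.ker_codRestrict _ _ _).trans (LinearMap.ker_comp _ _)
  exact ⟨(quotEquivOfEq _ _ hker.symm).trans (ψ.quotKerEquivOfSurjective hψ)⟩

end Submodule

theorem submodule_le_of_inter_le'_general (R N σ : Type*) [Ring R]
    [AddCommGroup N] [Module R N] [AddCommGroup σ] [Module R σ] [IsSimpleModule R σ]
    (A B A' : Submodule R N) (hAB : A ≤ B)
    (ha : ∃ n : ℕ, Nonempty (↥(Submodule.map A.mkQ B) ≃ₗ[R] (Fin n → σ)))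
    (hb : ¬ ∃ (P Q : Submodule R (↥B ⧸ Submodule.comap B.subtype A')), Q ≤ P ∧
      Nonempty ((↥P ⧸ Submodule.comap P.subtype Q) ≃ₗ[R] σ))
    (hc : ∀ P : Submodule R (N ⧸ A), IsSimpleModule R ↥P → P ≤ Submodule.map A.mkQ B)
    (hd : ∀ P : Submodule R (N ⧸ A), P ≠ ⊥ →
      ∃ Q : Submodule R (N ⧸ A), Q ≤ P ∧ IsSimpleModule R ↥Q)
    (M : Submodule R N) (hM : M ⊓ A' ≤ A) : M ≤ A := by
  by_contra hMA
  obtain ⟨S, hSM, hS⟩ := hd (M.map A.mkQ) <| by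
    rwa [ne_eq, ← le_bot_iff, Submodule.map_le_iff_le_comap, Submodule.comap_bot,
      Submodule.ker_mkQ]
  have hSB := hc S hS
  obtain ⟨n, ⟨e⟩⟩ := ha
  obtain ⟨eS⟩ : Nonempty (S ≃ₗ[R] σ) := isIsotypicOfType_submodule_iff.mp
    (e.isIsotypicOfType_iff.mpr (isIsotypicOfType_pi R (Fin n) σ)) S hSB
  set C := M ⊓ S.comap A.mkQ
  have hCB : C ≤ B := calc
    C ≤ (B.map A.mkQ).comap A.mkQ := inf_le_right.trans (Submodule.comap_mono hSB)
    _ = B := by rw [Submodule.comap_map_mkQ, sup_eq_right.mpr hAB]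
  obtain ⟨e₁⟩ : Nonempty ((C ⧸ A.comap C.subtype) ≃ₗ[R] S) := by
    have := Submodule.nonempty_quotient_equiv_of_le_map A.mkQ hSM
    rwa [Submodule.ker_mkQ] at this
  set g : C →ₗ[R] B ⧸ A'.comap B.subtype := Submodule.mkQ _ ∘ₗ Submodule.inclusion hCB
  have hg : LinearMap.ker g ≤ A.comap C.subtype := fun c hc ↦ hM ⟨c.2.1, by simpa [g] using hc⟩
  obtain ⟨e₂⟩ := Submodule.nonempty_quotient_equiv_range_quotient_map g _ hg
  exact hb ⟨_, _, LinearMap.map_le_range, ⟨e₂.symm.trans (e₁.trans eS)⟩⟩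

/-- Proposition 2.10 (module-theoretic form): let `A ≤ B` and `A' ≤ B` be submodules
of `N` and `σ` a simple module. Assume `B/A` is a finite direct sum of copies of `σ`,
`σ` is not a subquotient of `B/A'`, every simple submodule of `N/A` is contained in
`B/A`, and every nonzero submodule of `N/A` contains a simple submodule. Then every
submodule `M` of `N` with `M ∩ A' ⊆ A` satisfies `M ⊆ A`. -/
theorem submodule_le_of_inter_le' (R N σ : Type*) [Ring R]
    [AddCommGroup N] [Module R N] [AddCommGroup σ] [Module R σ] [IsSimpleModule R σ]
    (A B A' : Submodule R N) (hAB : A ≤ B) (hA'B : A' ≤ B)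
    (ha : ∃ n : ℕ, Nonempty (↥(Submodule.map A.mkQ B) ≃ₗ[R] (Fin n → σ)))
    (hb : ¬ ∃ (P Q : Submodule R (↥B ⧸ Submodule.comap B.subtype A')), Q ≤ P ∧
      Nonempty ((↥P ⧸ Submodule.comap P.subtype Q) ≃ₗ[R] σ))
    (hc : ∀ P : Submodule R (N ⧸ A), IsSimpleModule R ↥P → P ≤ Submodule.map A.mkQ B)
    (hd : ∀ P : Submodule R (N ⧸ A), P ≠ ⊥ →
      ∃ Q : Submodule R (N ⧸ A), Q ≤ P ∧ IsSimpleModule R ↥Q)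
    (M : Submodule R N) (hM : M ⊓ A' ≤ A) : M ≤ A :=
  submodule_le_of_inter_le'_general R N σ A B A' hAB ha hb hc hd M hM
end
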